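/- arXiv:2508.05911 — 3 statements merged into one kernel-verified Lean document; each statement's English description precedes it below -/
import Mathlib

section
/- Let 𝓕 be a finite family of graphs with min_{F∈𝓕} χ(F) = r + 1 ≥ 3, and let n ≥ 1. Then every G ∈ SPEX(n, 𝓕) satisfies ρ(G) ≥ (r−1)n/r − r/(4n). -/
open SimpleGraph

/-- `F` is contained in `G` as a subgraph (there is an injective map preserving adjacency). -/
def ContainsCopy {α β : Type*} (F : SimpleGraph α) (G : SimpleGraph β) : Prop :=
  ∃ f : α ↪ β, ∀ a b, F.Adj a b → G.Adj (f a) (f b)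

/-- The join of two graphs: disjoint union plus all edges between the two parts. -/
def graphJoin {α β : Type*} (G : SimpleGraph α) (H : SimpleGraph β) :
    SimpleGraph (α ⊕ β) where
  Adj x y :=
    match x, y with
    | Sum.inl a, Sum.inl b => G.Adj a b
    | Sum.inr a, Sum.inr b => H.Adj a b
    | Sum.inl _, Sum.inr _ => True
    | Sum.inr _, Sum.inl _ => True
  symm := by
    constructor
    rintro (a | a) (b | b) h
    · exact G.adj_symm h
    · trivial
    · trivial
    · exact H.adj_symm h
  loopless := by
    constructor
    rintro (a | a) h
    · exact G.irrefl h
    · exact H.irrefl h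

/-- The fan `H_ℓ = K_1 ∨ P_ℓ`. -/
def fan (ℓ : ℕ) : SimpleGraph (Fin 1 ⊕ Fin ℓ) :=
  graphJoin (⊤ : SimpleGraph (Fin 1)) (pathGraph ℓ)

/-- The degree of a vertex. -/
noncomputable def gdeg {V : Type*} (G : SimpleGraph V) (v : V) : ℕ :=
  (G.neighborSet v).ncard

/-- `G` is `k`-regular. -/
def IsKRegular {V : Type*} (G : SimpleGraph V) (k : ℕ) : Prop :=
  ∀ v, gdeg G v = k

/-- `G` is nearly `k`-regular: all degrees are `k` except one vertex of degree `k-1`. -/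
def IsNearlyKRegular {V : Type*} (G : SimpleGraph V) (k : ℕ) : Prop :=
  ∃ u, gdeg G u = k - 1 ∧ ∀ v, v ≠ u → gdeg G v = k

/-- The adjacency matrix of `G` over `ℝ`. -/
noncomputable def adjMat {V : Type*} (G : SimpleGraph V) : Matrix V V ℝ :=
  letI := Classical.decRel G.Adj
  G.adjMatrix ℝ

/-- The spectral radius of a graph: the largest eigenvalue of its adjacency matrix. -/
noncomputable def specRad {V : Type*} [Fintype V] (G : SimpleGraph V) : ℝ :=
  sSup {μ : ℝ | Module.End.HasEigenvalue (adjMat G).mulVecLin μ}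

/-- `SPEX n F`: the `F`-free graphs on `n` vertices of maximum spectral radius. -/
def SPEX (n : ℕ) {α : Type*} (F : SimpleGraph α) : Set (SimpleGraph (Fin n)) :=
  {G | ¬ ContainsCopy F G ∧
    ∀ H : SimpleGraph (Fin n), ¬ ContainsCopy F H → specRad H ≤ specRad G}

/-- `SPEXfam n m F`: the `𝓕`-free graphs on `n` vertices of maximum spectral radius,
for a family `𝓕 = {F i}` of graphs. -/
def SPEXfam (n : ℕ) {ι : Type*} (m : ι → ℕ) (F : ∀ i, SimpleGraph (Fin (m i))) :
    Set (SimpleGraph (Fin n)) :=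
  {G | (∀ i, ¬ ContainsCopy (F i) G) ∧
    ∀ H : SimpleGraph (Fin n), (∀ i, ¬ ContainsCopy (F i) H) → specRad H ≤ specRad G}

/-! The Turán graph `T(n, r)` is `r`-colourable, hence contains no member of `𝓕`, so
`ρ(G) ≥ ρ(T(n, r))`. Testing the Rayleigh quotient on the all-ones vector gives
`ρ(T(n, r)) ≥ 2 e(T(n, r)) / n = (n² - ∑ cᵢ²) / n`, where the part sizes `cᵢ` all lie in
`{q, q + 1}`; for such sizes `r ∑ cᵢ² = n² + r²/4 - (n - r (q + 1/2))² ≤ n² + r²/4`. -/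

open Finset Matrix Module.End

theorem LinearMap.IsSymmetric.exists_hasEigenvalue_inner_le {𝕜 E : Type*} [RCLike 𝕜]
    [NormedAddCommGroup E] [InnerProductSpace 𝕜 E] [FiniteDimensional 𝕜 E] {T : E →ₗ[𝕜] E}
    (hT : T.IsSymmetric) {x : E} (hx : x ≠ 0) :
    ∃ μ : ℝ, HasEigenvalue T μ ∧ RCLike.re (inner 𝕜 (T x) x) ≤ μ * ‖x‖ ^ 2 := by
  have : Nontrivial E := ⟨⟨x, 0, hx⟩⟩
  refine ⟨_, hT.hasEigenvalue_iSup_of_finiteDimensional, ?_⟩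
  have hbdd : BddAbove (Set.range fun y : { y : E // y ≠ 0 } ↦
      RCLike.re (inner 𝕜 (T y) (y : E)) / ‖(y : E)‖ ^ 2) := by
    refine ⟨‖LinearMap.toContinuousLinearMap T‖, ?_⟩
    rintro _ ⟨y, rfl⟩
    exact (le_abs_self _).trans ((LinearMap.toContinuousLinearMap T).rayleighQuotient_le_norm y)
  rw [← div_le_iff₀ (by positivity)]
  exact le_ciSup hbdd ⟨x, hx⟩

theorem Matrix.IsHermitian.dotProduct_mulVec_le_sSup_spectrum {V : Type*} [Fintype V]
    [DecidableEq V] {A : Matrix V V ℝ} (hA : A.IsHermitian) (x : V → ℝ) :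
    x ⬝ᵥ A *ᵥ x ≤ sSup (spectrum ℝ A) * (x ⬝ᵥ x) := by
  rcases eq_or_ne x 0 with rfl | hx
  · simp
  obtain ⟨μ, hμ, hle⟩ := (isSymmetric_toEuclideanLin_iff.mpr hA).exists_hasEigenvalue_inner_le
    (x := WithLp.toLp 2 x) (by simpa using hx)
  have hμA : μ ∈ spectrum ℝ A := spectrum_toLpLin (A := A) 2 ▸ hμ.mem_spectrum
  rw [EuclideanSpace.real_norm_sq_eq] at hle
  calc x ⬝ᵥ A *ᵥ x ≤ μ * (x ⬝ᵥ x) := by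
        simpa [EuclideanSpace.inner_toLp_toLp, dotProduct, sq] using hle
    _ ≤ sSup (spectrum ℝ A) * (x ⬝ᵥ x) := by
      gcongr
      · exact Finset.sum_nonneg fun i _ ↦ mul_self_nonneg (x i)
      · exact le_csSup A.finite_real_spectrum.bddAbove hμA

theorem specRad_eq_sSup_spectrum {V : Type*} [Fintype V] [DecidableEq V] (G : SimpleGraph V) :
    specRad G = sSup (spectrum ℝ (adjMat G)) := by
  unfold specRad
  congr 1
  ext μ
  rw [Set.mem_ofPred_eq, hasEigenvalue_iff_mem_spectrum, ← toLin'_apply', spectrum_toLin']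

theorem sum_adjMat_le_specRad_mul_card {V : Type*} [Fintype V] (G : SimpleGraph V) :
    ∑ u, ∑ v, adjMat G u v ≤ specRad G * Fintype.card V := by
  classical
  have hA : (adjMat G).IsHermitian := by
    unfold adjMat
    exact G.isHermitian_adjMatrix ℝ
  simpa [specRad_eq_sSup_spectrum, dotProduct, mulVec, Finset.mul_sum] using
    hA.dotProduct_mulVec_le_sSup_spectrum 1

theorem ContainsCopy.colorable {α β : Type*} {F : SimpleGraph α} {G : SimpleGraph β} {k : ℕ}
    (h : ContainsCopy F G) (hG : G.Colorable k) : F.Colorable k := by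
  obtain ⟨f, hf⟩ := h
  exact hG.of_hom ⟨f, hf _ _⟩

theorem turanGraph_colorable {n r : ℕ} (hr : 0 < r) : (turanGraph n r).Colorable r :=
  ⟨Coloring.mk (fun v ↦ ⟨v % r, Nat.mod_lt _ hr⟩) fun hadj heq ↦
    hadj (by simpa using congrArg Fin.val heq)⟩

theorem card_mul_sum_sq_le {ι : Type*} (s : Finset ι) (c : ι → ℝ) (q : ℝ)
    (hc : ∀ i ∈ s, c i = q ∨ c i = q + 1) :
    #s * ∑ i ∈ s, c i ^ 2 ≤ (∑ i ∈ s, c i) ^ 2 + #s ^ 2 / 4 := by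
  have hsq : ∑ i ∈ s, c i ^ 2 = (2 * q + 1) * ∑ i ∈ s, c i - #s * (q * (q + 1)) := by
    rw [Finset.mul_sum, ← nsmul_eq_mul, ← Finset.sum_const, ← Finset.sum_sub_distrib]
    refine Finset.sum_congr rfl fun i hi ↦ ?_
    rcases hc i hi with h | h <;> rw [h] <;> ring
  rw [hsq]
  nlinarith [sq_nonneg (∑ i ∈ s, c i - #s * (q + 1 / 2))]

theorem card_filter_mod_eq (n : ℕ) {r i : ℕ} (hi : i < r) :
    #{v ∈ range n | v % r = i} = n / r + if i < n % r then 1 else 0 := by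
  have h := Nat.count_modEq_card n (hi.trans_le' (Nat.zero_le i)) i
  rw [Nat.count_eq_card_filter_range, Nat.mod_eq_of_lt hi] at h
  simpa [Nat.ModEq, Nat.mod_eq_of_lt hi] using h

theorem sum_card_filter_mod_eq (n : ℕ) {r : ℕ} (hr : 0 < r) :
    ∑ i ∈ range r, #{v ∈ range n | v % r = i} = n := by
  simpa using (card_eq_sum_card_fiberwise (s := range n) (t := range r) (f := (· % r))
    fun v _ ↦ mem_range.mpr (Nat.mod_lt v hr)).symm

theorem sum_sum_ite_mod_eq (n : ℕ) {r : ℕ} (hr : 0 < r) :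
    ∑ u ∈ range n, ∑ v ∈ range n, (if u % r = v % r then (1 : ℝ) else 0) =
      ∑ i ∈ range r, (#{v ∈ range n | v % r = i} : ℝ) ^ 2 := by
  rw [← sum_fiberwise_of_maps_to (t := range r) (g := (· % r))
    fun u _ ↦ mem_range.mpr (Nat.mod_lt u hr)]
  refine sum_congr rfl fun i _ ↦ ?_
  rw [sq, ← nsmul_eq_mul, ← sum_const]
  refine sum_congr rfl fun u hu ↦ ?_
  rw [(mem_filter.mp hu).2, sum_boole]
  simp_rw [eq_comm (a := i)]

theorem mul_sum_sum_ite_mod_eq_le (n : ℕ) {r : ℕ} (hr : 0 < r) :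
    r * ∑ u ∈ range n, ∑ v ∈ range n, (if u % r = v % r then (1 : ℝ) else 0) ≤
      n ^ 2 + r ^ 2 / 4 := by
  have h := card_mul_sum_sq_le (range r) (fun i ↦ (#{v ∈ range n | v % r = i} : ℝ)) (n / r : ℕ)
    fun i hi ↦ by
      rw [card_filter_mod_eq n (mem_range.mp hi)]
      split_ifs <;> simp
  rw [sum_sum_ite_mod_eq n hr]
  simpa [← Nat.cast_sum, sum_card_filter_mod_eq n hr] using h

theorem sum_adjMat_turanGraph (n r : ℕ) :
    ∑ u, ∑ v, adjMat (turanGraph n r) u v =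
      n ^ 2 - ∑ u ∈ range n, ∑ v ∈ range n, (if u % r = v % r then (1 : ℝ) else 0) := by
  have hentry (u v : Fin n) : adjMat (turanGraph n r) u v =
      1 - if (u : ℕ) % r = v % r then (1 : ℝ) else 0 := by
    by_cases h : (u : ℕ) % r = v % r <;> simp [adjMat, turanGraph_adj, h]
  simp only [hentry, sum_sub_distrib, sum_const, card_univ, Fintype.card_fin, nsmul_eq_mul,
    mul_one, sq]
  rw [Fin.sum_univ_eq_sum_range (fun u ↦ ∑ v : Fin n, if u % r = v % r then (1 : ℝ) else 0)]
  congr 1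
  exact sum_congr rfl fun u _ ↦ Fin.sum_univ_eq_sum_range (fun v ↦ if u % r = v % r then 1 else 0) n

theorem le_specRad_turanGraph {n r : ℕ} (hn : 0 < n) (hr : 0 < r) :
    ((r : ℝ) - 1) * n / r - r / (4 * n) ≤ specRad (turanGraph n r) := by
  have hle := sum_adjMat_le_specRad_mul_card (turanGraph n r)
  have hpairs := mul_sum_sum_ite_mod_eq_le n hr
  rw [sum_adjMat_turanGraph, Fintype.card_fin] at hle
  have hn' : (0 : ℝ) < n := by exact_mod_cast hn
  have hr' : (0 : ℝ) < r := by exact_mod_cast hr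
  rw [div_sub_div _ _ hr'.ne' (by positivity), div_le_iff₀ (by positivity)]
  nlinarith

theorem spex_spectral_lower_bound_general
    (r : ℕ) (hr : 2 ≤ r)
    (ι : Type) (m : ι → ℕ)
    (F : ∀ i, SimpleGraph (Fin (m i)))
    -- `min_{F ∈ 𝓕} χ(F) = r + 1`
    (hchrom_ge : ∀ i, ((r : ℕ∞) + 1) ≤ (F i).chromaticNumber)
    (n : ℕ) (hn : 1 ≤ n) :
    ∀ G ∈ SPEXfam n m F,
      ((r : ℝ) - 1) * n / r - r / (4 * n) ≤ specRad G := by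
  intro G hG
  have hturan_free (i : ι) : ¬ ContainsCopy (F i) (turanGraph n r) := fun h ↦ by
    have hχ := (h.colorable (turanGraph_colorable (by omega))).chromaticNumber_le
    exact (ENat.add_one_le_iff (ENat.natCast_ne_top r)).mp ((hchrom_ge i).trans hχ) |>.false
  exact (le_specRad_turanGraph hn (by omega)).trans (hG.2 _ hturan_free)

/-- every spectral extremal `𝓕`-free graph on `n ≥ 1` vertices satisfies
`ρ(G) ≥ (r-1)n/r - r/(4n)`. -/
theorem spex_spectral_lower_bound
    (r : ℕ) (hr : 2 ≤ r)
    (ι : Type) [Fintype ι] [Nonempty ι] (m : ι → ℕ)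
    (F : ∀ i, SimpleGraph (Fin (m i)))
    -- `min_{F ∈ 𝓕} χ(F) = r + 1`
    (hchrom_ge : ∀ i, ((r : ℕ∞) + 1) ≤ (F i).chromaticNumber)
    (hchrom_eq : ∃ i, (F i).chromaticNumber = ((r : ℕ∞) + 1))
    (n : ℕ) (hn : 1 ≤ n) :
    ∀ G ∈ SPEXfam n m F,
      ((r : ℝ) - 1) * n / r - r / (4 * n) ≤ specRad G :=
  spex_spectral_lower_bound_general r hr ι m F hchrom_ge n hn
end

section
/- Let k ≥ 1 be an odd integer, let n ≥ 6k, and let G ∈ SPEX(n, H_{2k+3}). Then ρ(G) ≥ (k + √(k² + n²))/2 if n ≡ 0 (mod 4); ρ(G) ≥ (k + √(k² + n² − 4))/2 if n ≡ 2 (mod 4); and ρ(G) ≥ (k + √(k² + n² − 1))/2 if n ≡ 1 or 3 (mod 4). -/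
open SimpleGraph

/-!
Split the `n` vertices into a part `A` of even size `a` close to `n / 2` and an independent part
`B`, join `A` completely to `B`, and put on `A` a `k`-regular graph whose components have at most
`2k` vertices (disjoint circulants). A fan `H_{2k+3}` cannot have its centre in `B`, since its path
would then lie in one component of `A`; nor in `A`, since at most `k` path vertices are neighbours
of the centre inside `A` and at most `k + 2` pairwise non-consecutive ones lie in `B`. The vector
equal to `ρ` on `A` and to `a` on `B` is an eigenvector for `ρ = (k + √(k² + 4a(n - a))) / 2`, and
`4a(n - a)` equals `n²`, `n² - 4` or `n² - 1` for the best even `a`.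
-/

variable {α V W : Type*}

lemma gdeg_eq_degree {G : SimpleGraph V} [Fintype V] [DecidableRel G.Adj] (v : V) :
    gdeg G v = G.degree v := by
  rw [gdeg, ← Nat.card_coe_set_eq, Nat.card_eq_fintype_card, card_neighborSet_eq_degree]

section Copies

variable {F : SimpleGraph α} {G : SimpleGraph V} {H : SimpleGraph W}

lemma ContainsCopy.card_le [Fintype α] [Fintype V] (h : ContainsCopy F G) :
    Fintype.card α ≤ Fintype.card V :=
  let ⟨f, _⟩ := h
  Fintype.card_le_of_embedding f

lemma ContainsCopy.of_iso (h : ContainsCopy F G) (e : G ≃g H) : ContainsCopy F H :=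
  let ⟨f, hf⟩ := h
  ⟨f.trans e.toEquiv.toEmbedding, fun a b hab => e.map_adj_iff.2 (hf a b hab)⟩

lemma containsCopy_of_forall_mem_range (f : α ↪ W) (hf : ∀ a b, F.Adj a b → H.Adj (f a) (f b))
    (g : V → W) (hg : ∀ x y, H.Adj (g x) (g y) → G.Adj x y) (hfg : ∀ a, f a ∈ Set.range g) :
    ContainsCopy F G := by
  choose h hh using hfg
  refine ⟨⟨h, fun a b hab => f.injective ?_⟩, fun a b hab => hg _ _ ?_⟩
  · rw [← hh a, ← hh b, hab]
  · change H.Adj (g (h a)) (g (h b))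
    simpa only [hh] using hf a b hab

lemma ContainsCopy.of_sum (hF : F.Connected) (h : ContainsCopy F (G ⊕g H)) :
    ContainsCopy F G ∨ ContainsCopy F H := by
  obtain ⟨f, hf⟩ := h
  obtain ⟨a₀⟩ := hF.nonempty
  have reach : ∀ a, (G ⊕g H).Reachable (f a₀) (f a) :=
    fun a => (hF.preconnected a₀ a).map ⟨f, hf _ _⟩
  rcases h₀ : f a₀ with v₀ | w₀
  · refine .inl (containsCopy_of_forall_mem_range f hf Sum.inl (fun _ _ => sum_adj_inl.1) ?_)
    intro a
    rcases ha : f a with v | w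
    · exact ⟨v, rfl⟩
    · exact absurd (h₀ ▸ ha ▸ reach a) (not_reachable_sum_inl_inr v₀ w)
  · refine .inr (containsCopy_of_forall_mem_range f hf Sum.inr (fun _ _ => sum_adj_inr.1) ?_)
    intro a
    rcases ha : f a with v | w
    · exact absurd (h₀ ▸ ha ▸ reach a).symm (not_reachable_sum_inl_inr v w₀)
    · exact ⟨w, rfl⟩

end Copies

lemma IsKRegular.sum {G : SimpleGraph V} {H : SimpleGraph W} {k : ℕ} (hG : IsKRegular G k)
    (hH : IsKRegular H k) : IsKRegular (G ⊕g H) k := by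
  rintro (v | w)
  · rw [gdeg, neighborSet_sum_inl, Set.ncard_image_of_injective _ Sum.inl_injective]
    exact hG v
  · rw [gdeg, neighborSet_sum_inr, Set.ncard_image_of_injective _ Sum.inr_injective]
    exact hH w

lemma gdeg_circulantGraph [AddGroup V] {S : Set V} (hS : ∀ x ∈ S, -x ∈ S) (h0 : (0 : V) ∉ S)
    (v : V) : gdeg (circulantGraph S) v = S.ncard := by
  have : (circulantGraph S).neighborSet v = (· + v) '' S := by
    ext w
    simp only [mem_neighborSet, circulantGraph_adj, Set.mem_image, ← eq_sub_iff_add_eq,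
      exists_eq_right]
    constructor
    · rintro ⟨-, h | h⟩
      · simpa using hS _ h
      · exact h
    · intro h
      refine ⟨fun hvw => h0 (by simpa [hvw] using h), .inr h⟩
  rw [gdeg, this, Set.ncard_image_of_injective _ (add_left_injective v)]

def farCirculant (t k : ℕ) : SimpleGraph (ZMod (2 * t + k + 1)) :=
  circulantGraph {x | t < x.val ∧ x.val ≤ t + k}

lemma isKRegular_farCirculant (t k : ℕ) : IsKRegular (farCirculant t k) k := by
  set S : Set (ZMod (2 * t + k + 1)) := {x | t < x.val ∧ x.val ≤ t + k}
  have hS : ∀ x ∈ S, -x ∈ S := by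
    rintro x ⟨h₁, h₂⟩
    have hx : x ≠ 0 := by rintro rfl; simp at h₁
    simp only [S, Set.mem_ofPred_eq, ZMod.neg_val, hx, if_false]
    have := ZMod.val_lt x
    omega
  have h0 : (0 : ZMod (2 * t + k + 1)) ∉ S := by simp [S]
  have hval : ZMod.val '' S = Set.Ioc t (t + k) := by
    ext y
    constructor
    · rintro ⟨x, hx, rfl⟩
      exact hx
    · rintro ⟨h₁, h₂⟩
      have hy : y < 2 * t + k + 1 := by omega
      exact ⟨y, by simp [S, ZMod.val_cast_of_lt hy, h₁, h₂], ZMod.val_cast_of_lt hy⟩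
  intro v
  rw [farCirculant, gdeg_circulantGraph hS h0,
    ← Set.ncard_image_of_injective _ (ZMod.val_injective _), hval, ← Finset.coe_Ioc,
    Set.ncard_coe_finset, Nat.card_Ioc]
  omega

theorem exists_isKRegular_not_containsCopy_pathGraph {k ℓ : ℕ} (hk : Odd k) (hℓ : 2 * k < ℓ)
    (a : ℕ) (ha : Even a) (hka : k + 1 ≤ a) :
    ∃ (A : Type) (_ : Fintype A) (R : SimpleGraph A),
      Fintype.card A = a ∧ IsKRegular R k ∧ ¬ContainsCopy (pathGraph ℓ) R := by
  obtain ⟨m, rfl⟩ : ∃ m, ℓ = m + 1 := ⟨ℓ - 1, by omega⟩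
  induction a using Nat.strong_induction_on with
  | _ a ih =>
  have ha2 := Nat.even_iff.1 ha
  have hk2 := Nat.odd_iff.1 hk
  by_cases hsmall : a ≤ 2 * k
  · obtain ⟨t, rfl⟩ : ∃ t, a = 2 * t + k + 1 := ⟨(a - k - 1) / 2, by omega⟩
    refine ⟨_, inferInstance, farCirculant t k, ZMod.card _, isKRegular_farCirculant t k,
      fun h => ?_⟩
    have := h.card_le
    simp only [Fintype.card_fin, ZMod.card] at this
    omega
  · obtain ⟨A, _, R, hA, hR, hP⟩ := ih (a - (k + 1)) (by omega)
      (by rw [Nat.even_sub (by omega)]; simp [ha, hk.add_one]) (by omega)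
    refine ⟨_, inferInstance, farCirculant 0 k ⊕g R, ?_, (isKRegular_farCirculant 0 k).sum hR,
      fun h => ?_⟩
    · simp only [Fintype.card_sum, ZMod.card, hA]
      omega
    · rcases h.of_sum (pathGraph_connected m) with h | h
      · have := h.card_le
        simp only [Fintype.card_fin, ZMod.card] at this
        omega
      · exact hP h

@[simp] lemma graphJoin_adj_inl_inl {G : SimpleGraph V} {H : SimpleGraph W} {a b : V} :
    (graphJoin G H).Adj (.inl a) (.inl b) ↔ G.Adj a b := Iff.rfl

@[simp] lemma graphJoin_adj_inr_inr {G : SimpleGraph V} {H : SimpleGraph W} {a b : W} :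
    (graphJoin G H).Adj (.inr a) (.inr b) ↔ H.Adj a b := Iff.rfl

@[simp] lemma graphJoin_adj_inl_inr {G : SimpleGraph V} {H : SimpleGraph W} {a : V} {b : W} :
    (graphJoin G H).Adj (.inl a) (.inr b) := trivial

@[simp] lemma graphJoin_adj_inr_inl {G : SimpleGraph V} {H : SimpleGraph W} {a : W} {b : V} :
    (graphJoin G H).Adj (.inr a) (.inl b) := trivial

lemma ncard_le_of_isIndepSet_pathGraph {ℓ : ℕ} {T : Set (Fin ℓ)}
    (hT : (pathGraph ℓ).IsIndepSet T) : T.ncard ≤ (ℓ + 1) / 2 := by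
  calc T.ncard ≤ (Set.Iio ((ℓ + 1) / 2)).ncard := by
        refine Set.ncard_le_ncard_of_injOn (fun j => j.val / 2) (fun j _ => ?_) ?_
        · simp only [Set.mem_Iio]; omega
        · intro i hi j hj hij
          by_contra hne
          refine hT hi hj hne (pathGraph_adj.2 ?_)
          have : i.val ≠ j.val := Fin.val_ne_of_ne hne
          simp only at hij
          omega
    _ = (ℓ + 1) / 2 := Set.ncard_Iio_nat _

lemma not_containsCopy_fan_graphJoin_bot [Finite V] {R : SimpleGraph V} {k ℓ : ℕ}
    (hℓ : 2 * k + 2 ≤ ℓ) (hR : ∀ v, gdeg R v ≤ k) (hP : ¬ContainsCopy (pathGraph ℓ) R) :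
    ¬ContainsCopy (fan ℓ) (graphJoin R (⊥ : SimpleGraph W)) := by
  rintro ⟨f, hf⟩
  set p : Fin ℓ → V ⊕ W := fun j => f (.inr j)
  have hp : ∀ i j, (pathGraph ℓ).Adj i j → (graphJoin R ⊥).Adj (p i) (p j) :=
    fun i j h => hf (.inr i) (.inr j) h
  rcases hc : f (.inl 0) with v | w
  · set S : Set (Fin ℓ) := {j | (p j).isLeft}
    have hS : S.ncard ≤ k := by
      calc S.ncard ≤ (Sum.inl '' R.neighborSet v : Set (V ⊕ W)).ncard := by
            refine Set.ncard_le_ncard_of_injOn p (fun j hj => ?_)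
              (fun i _ j _ hij => Sum.inr_injective (f.injective hij))
            obtain ⟨u, hu⟩ := Sum.isLeft_iff.1 hj
            refine ⟨u, ?_, hu.symm⟩
            have := hf (.inl 0) (.inr j) trivial
            rwa [hc, show f (.inr j) = _ from hu, graphJoin_adj_inl_inl] at this
        _ ≤ k := by rw [Set.ncard_image_of_injective _ Sum.inl_injective]; exact hR v
    have hSc : Sᶜ.ncard ≤ (ℓ + 1) / 2 := by
      refine ncard_le_of_isIndepSet_pathGraph fun i hi j hj _ hij => ?_
      obtain ⟨x, hx⟩ := Sum.isRight_iff.1 (Sum.not_isLeft.1 hi)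
      obtain ⟨y, hy⟩ := Sum.isRight_iff.1 (Sum.not_isLeft.1 hj)
      have := hp i j hij
      rw [hx, hy, graphJoin_adj_inr_inr] at this
      exact this
    have := Set.ncard_add_ncard_compl S
    rw [Nat.card_eq_fintype_card, Fintype.card_fin] at this
    omega
  · refine hP (containsCopy_of_forall_mem_range
      ⟨p, fun i j h => Sum.inr_injective (f.injective h)⟩ hp Sum.inl (fun _ _ => id) fun j => ?_)
    have := hf (.inl 0) (.inr j) trivial
    rw [hc] at this
    rcases hj : p j with u | w'
    · exact ⟨u, hj.symm⟩
    · rw [show f (.inr j) = _ from hj] at this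
      exact this.elim

section Spectral

open Module.End Matrix

variable [Fintype V] [Fintype W]

lemma hasEigenvalue_adjMat_of_mulVec_eq {G : SimpleGraph V} {μ : ℝ} {v : V → ℝ} (hv : v ≠ 0)
    (h : adjMat G *ᵥ v = μ • v) : HasEigenvalue (adjMat G).mulVecLin μ :=
  hasEigenvalue_of_hasEigenvector ⟨mem_eigenspace_iff.2 h, hv⟩

lemma le_specRad {G : SimpleGraph V} {μ : ℝ} (h : HasEigenvalue (adjMat G).mulVecLin μ) :
    μ ≤ specRad G :=
  le_csSup (finite_hasEigenvalue _).bddAbove h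

lemma hasEigenvalue_adjMat_of_iso {G : SimpleGraph V} {H : SimpleGraph W} (e : G ≃g H) {μ : ℝ}
    (h : HasEigenvalue (adjMat G).mulVecLin μ) : HasEigenvalue (adjMat H).mulVecLin μ := by
  classical
  obtain ⟨v, hv, hv0⟩ := h.exists_hasEigenvector
  have hH : adjMat H = (adjMat G).submatrix e.toEquiv.symm e.toEquiv.symm := by
    rw [adjMat, adjMat, ← Iso.reindex_adjMatrix (α := ℝ) e]
    rfl
  refine hasEigenvalue_adjMat_of_mulVec_eq (v := v ∘ e.toEquiv.symm) (fun h0 => hv0 ?_) ?_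
  · ext x
    simpa only [Function.comp_apply, Equiv.symm_apply_apply, Pi.zero_apply]
      using congrFun h0 (e.toEquiv x)
  · rw [hH, submatrix_mulVec_equiv, Equiv.symm_symm, Function.comp_assoc, Equiv.symm_comp_self,
      Function.comp_id, ← mulVecLin_apply, mem_eigenspace_iff.1 hv]
    rfl

lemma specRad_congr {G : SimpleGraph V} {H : SimpleGraph W} (e : G ≃g H) :
    specRad G = specRad H := by
  unfold specRad
  congr 1
  ext μ
  exact ⟨hasEigenvalue_adjMat_of_iso e, hasEigenvalue_adjMat_of_iso e.symm⟩

lemma specRad_le_of_mem_SPEX {n : ℕ} {F : SimpleGraph α} {G : SimpleGraph (Fin n)}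
    (hG : G ∈ SPEX n F) {H : SimpleGraph W} (hW : Fintype.card W = n)
    (hH : ¬ContainsCopy F H) : specRad H ≤ specRad G := by
  let e := Iso.map (Fintype.equivFinOfCardEq hW) H
  rw [specRad_congr e]
  exact hG.2 _ fun h => hH (h.of_iso e.symm)

lemma adjMat_graphJoin_bot_mulVec {R : SimpleGraph V} {k : ℕ} (hR : IsKRegular R k) {ρ : ℝ}
    (hρ : ρ ^ 2 = k * ρ + Fintype.card V * Fintype.card W) :
    adjMat (graphJoin R (⊥ : SimpleGraph W)) *ᵥ Sum.elim (fun _ => ρ) (fun _ => Fintype.card V) =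
      ρ • Sum.elim (fun _ => ρ) (fun _ => (Fintype.card V : ℝ)) := by
  classical
  ext (v | w)
  · have hdeg : ∑ x, (if R.Adj v x then ρ else 0) = k * ρ := by
      rw [← hR v, gdeg_eq_degree, ← R.adjMatrix_mulVec_const_apply]
      simp [mulVec, dotProduct, adjMatrix_apply]
    simp [mulVec, dotProduct, adjMat, adjMatrix_apply, Fintype.sum_sum_type, hdeg]
    linear_combination -hρ
  · simp [mulVec, dotProduct, adjMat, adjMatrix_apply, Fintype.sum_sum_type, mul_comm]

end Spectral

lemma le_specRad_graphJoin_bot [Fintype V] [Nonempty V] [Fintype W] {R : SimpleGraph V} {k : ℕ}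
    (hk : 0 < k) (hR : IsKRegular R k) :
    ((k : ℝ) + √((k : ℝ) ^ 2 + 4 * Fintype.card V * Fintype.card W)) / 2 ≤
      specRad (graphJoin R (⊥ : SimpleGraph W)) := by
  set ρ := ((k : ℝ) + √((k : ℝ) ^ 2 + 4 * Fintype.card V * Fintype.card W)) / 2
  have hρ : ρ ^ 2 = k * ρ + Fintype.card V * Fintype.card W := by
    have := Real.sq_sqrt
      (by positivity : (0 : ℝ) ≤ (k : ℝ) ^ 2 + 4 * Fintype.card V * Fintype.card W)
    linear_combination this / 4
  have hρ0 : ρ ≠ 0 := by positivity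
  refine le_specRad (hasEigenvalue_adjMat_of_mulVec_eq (fun h => hρ0 ?_)
    (adjMat_graphJoin_bot_mulVec hR hρ))
  simpa using congrFun h (.inl (Classical.arbitrary V))

theorem le_specRad_of_mem_SPEX_fan {k n a : ℕ} (hk : Odd k) (ha : Even a) (hka : k + 1 ≤ a)
    (han : a ≤ n) {G : SimpleGraph (Fin n)} (hG : G ∈ SPEX n (fan (2 * k + 3))) :
    ((k : ℝ) + √((k : ℝ) ^ 2 + 4 * a * (n - a))) / 2 ≤ specRad G := by
  obtain ⟨A, _, R, hA, hR, hP⟩ :=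
    exists_isKRegular_not_containsCopy_pathGraph hk (by omega : 2 * k < 2 * k + 3) a ha hka
  have : Nonempty A := Fintype.card_pos_iff.1 (by omega)
  calc ((k : ℝ) + √((k : ℝ) ^ 2 + 4 * a * (n - a))) / 2
      = ((k : ℝ) + √((k : ℝ) ^ 2 + 4 * Fintype.card A * Fintype.card (Fin (n - a)))) / 2 := by
        rw [hA, Fintype.card_fin, Nat.cast_sub han]
    _ ≤ specRad (graphJoin R (⊥ : SimpleGraph (Fin (n - a)))) :=
        le_specRad_graphJoin_bot hk.pos hR
    _ ≤ specRad G := specRad_le_of_mem_SPEX hG (by simp [hA]; omega)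
        (not_containsCopy_fan_graphJoin_bot (by omega) (fun v => (hR v).le) hP)

theorem spex_spectral_lower_bound_odd_k_general (k n : ℕ) (hko : Odd k)
    (hn : 6 * k ≤ n) :
    ∀ G ∈ SPEX n (fan (2 * k + 3)),
      (n % 4 = 0 →
        ((k : ℝ) + Real.sqrt ((k : ℝ) ^ 2 + (n : ℝ) ^ 2)) / 2 ≤ specRad G) ∧
      (n % 4 = 2 →
        ((k : ℝ) + Real.sqrt ((k : ℝ) ^ 2 + (n : ℝ) ^ 2 - 4)) / 2 ≤ specRad G) ∧
      (n % 4 = 1 ∨ n % 4 = 3 →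
        ((k : ℝ) + Real.sqrt ((k : ℝ) ^ 2 + (n : ℝ) ^ 2 - 1)) / 2 ≤ specRad G) := by
  intro G hG
  have hk := hko.pos
  have bound (a : ℕ) (ha : Even a) (hka : k + 1 ≤ a) (han : a ≤ n) :=
    le_specRad_of_mem_SPEX_fan hko ha hka han hG
  refine ⟨fun h => ?_, fun h => ?_, fun h => ?_⟩
  · obtain ⟨m, rfl⟩ : ∃ m, n = 4 * m := ⟨n / 4, by omega⟩
    convert bound (2 * m) (by simp) (by omega) (by omega) using 4
    push_cast; ring
  · obtain ⟨m, rfl⟩ : ∃ m, n = 4 * m + 2 := ⟨n / 4, by omega⟩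
    convert bound (2 * m + 2) (by simp [parity_simps]) (by omega) (by omega) using 4
    push_cast; ring
  · rcases h with h | h
    · obtain ⟨m, rfl⟩ : ∃ m, n = 4 * m + 1 := ⟨n / 4, by omega⟩
      convert bound (2 * m) (by simp) (by omega) (by omega) using 4
      push_cast; ring
    · obtain ⟨m, rfl⟩ : ∃ m, n = 4 * m + 3 := ⟨n / 4, by omega⟩
      convert bound (2 * m + 2) (by simp [parity_simps]) (by omega) (by omega) using 4
      push_cast; ring

/-- lower bounds on the spectral radius of graphs in `SPEX(n, H_{2k+3})`
for odd `k ≥ 1` and `n ≥ 6k`, according to `n mod 4`. -/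
theorem spex_spectral_lower_bound_odd_k (k n : ℕ) (hko : Odd k) (hk : 1 ≤ k)
    (hn : 6 * k ≤ n) :
    ∀ G ∈ SPEX n (fan (2 * k + 3)),
      (n % 4 = 0 →
        ((k : ℝ) + Real.sqrt ((k : ℝ) ^ 2 + (n : ℝ) ^ 2)) / 2 ≤ specRad G) ∧
      (n % 4 = 2 →
        ((k : ℝ) + Real.sqrt ((k : ℝ) ^ 2 + (n : ℝ) ^ 2 - 4)) / 2 ≤ specRad G) ∧
      (n % 4 = 1 ∨ n % 4 = 3 →
        ((k : ℝ) + Real.sqrt ((k : ℝ) ^ 2 + (n : ℝ) ^ 2 - 1)) / 2 ≤ specRad G) :=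
  spex_spectral_lower_bound_odd_k_general k n hko hn
end

section
/- Let k ≥ 1 be an integer and let G be a finite simple graph. The join G ∨ ¬K_{2k+3} of G with the empty graph on 2k+3 vertices is H_{2k+3}-free if and only if the maximum degree of G is at most k and G is P_{2k+3}-free. -/
open SimpleGraph

open Function Sum

/-!
The centre of a copy of `H_ℓ = K_1 ∨ P_ℓ` in `G ∨ ¬K_m` is either a vertex of `¬K_m`, and then
the whole path lies in `G`, or a vertex `a` of `G`. In the second case the path vertices sent
into `¬K_m` form an independent set of `P_ℓ`, so there are at most `⌈ℓ/2⌉` of them, and the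
remaining `⌊ℓ/2⌋` or more are distinct neighbours of `a`. Conversely, a copy of `P_ℓ` in `G`
gives a fan centred in `¬K_m`, and a vertex of degree `⌊ℓ/2⌋` gives one centred at it, because
`P_ℓ` is a subgraph of `K_{⌊ℓ/2⌋,⌈ℓ/2⌉}`. For `ℓ = 2k + 3` we have `⌊ℓ/2⌋ = k + 1`.
-/

variable {α β γ δ V W : Type*}

lemma containsCopy_iff_isContained {F : SimpleGraph α} {G : SimpleGraph β} :
    ContainsCopy F G ↔ F ⊑ G := by
  rw [isContained_iff_exists_le_comap]
  rfl

def graphJoinComm (G : SimpleGraph α) (H : SimpleGraph β) : graphJoin G H ≃g graphJoin H G where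
  toEquiv := Equiv.sumComm α β
  map_rel_iff' := by rintro (a | a) (b | b) <;> exact Iff.rfl

def graphJoinAssoc (A : SimpleGraph α) (B : SimpleGraph β) (C : SimpleGraph γ) :
    graphJoin (graphJoin A B) C ≃g graphJoin A (graphJoin B C) where
  toEquiv := Equiv.sumAssoc α β γ
  map_rel_iff' := by rintro ((a | a) | a) ((b | b) | b) <;> exact Iff.rfl

lemma graphJoin_isContained_graphJoin {A : SimpleGraph α} {B : SimpleGraph β}
    {C : SimpleGraph γ} {D : SimpleGraph δ} (hAB : A ⊑ B) (hCD : C ⊑ D) :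
    graphJoin A C ⊑ graphJoin B D := by
  obtain ⟨f⟩ := hAB
  obtain ⟨g⟩ := hCD
  refine ⟨⟨⟨Sum.map f g, ?_⟩, f.injective.sumMap g.injective⟩⟩
  rintro (a | a) (b | b) h
  exacts [f.toHom.map_adj h, trivial, trivial, g.toHom.map_adj h]

lemma graphJoin_bot_bot :
    graphJoin (⊥ : SimpleGraph α) (⊥ : SimpleGraph β) = completeBipartiteGraph α β := by
  ext (a | a) (b | b) <;> simp [graphJoin, completeBipartiteGraph]

lemma pathGraph_isContained_completeBipartiteGraph (n : ℕ) :
    pathGraph n ⊑ completeBipartiteGraph (Fin (n / 2)) (Fin ((n + 1) / 2)) := by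
  let f : Fin n → Fin (n / 2) ⊕ Fin ((n + 1) / 2) := fun i =>
    if h : i.val % 2 = 0 then inr ⟨i / 2, by omega⟩ else inl ⟨i / 2, by omega⟩
  refine ⟨⟨⟨f, fun {i j} hij => ?_⟩, fun i j hij => ?_⟩⟩
  · rw [pathGraph_adj] at hij
    simp only [f, completeBipartiteGraph]
    split_ifs <;> simp <;> omega
  · change f i = f j at hij
    simp only [f] at hij
    split_ifs at hij <;> simp at hij <;> omega

lemma card_le_of_isIndepSet_pathGraph {n : ℕ} {s : Finset (Fin n)}
    (hs : (pathGraph n).IsIndepSet (s : Set (Fin n))) : s.card ≤ (n + 1) / 2 := by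
  -- distinct vertices with the same `i / 2` are consecutive on the path, hence adjacent
  have hinj : Set.InjOn (fun i : Fin n => (⟨i / 2, by omega⟩ : Fin ((n + 1) / 2))) s := by
    intro i hi j hj hij
    by_contra hne
    refine hs hi hj hne ?_
    simp only [Fin.mk.injEq] at hij
    rw [pathGraph_adj]
    omega
  simpa using Finset.card_le_card_of_injOn _ (fun i _ => Finset.mem_coe.2 (Finset.mem_univ _)) hinj

lemma star_isContained_of_le_ncard [Finite V] {G : SimpleGraph V} {a : V} {r : ℕ}
    (hr : r ≤ (G.neighborSet a).ncard) :
    graphJoin (⊤ : SimpleGraph (Fin 1)) (⊥ : SimpleGraph (Fin r)) ⊑ G := by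
  have := Fintype.ofFinite (G.neighborSet a)
  obtain ⟨e⟩ : Nonempty (Fin r ↪ G.neighborSet a) := Function.Embedding.nonempty_of_card_le <| by
    rwa [Fintype.card_fin, ← Nat.card_eq_fintype_card, Nat.card_coe_set_eq]
  refine ⟨⟨⟨Sum.elim (fun _ => a) (fun i => e i), fun {x y} h => ?_⟩, fun x y h => ?_⟩⟩
  · rcases x with x | i <;> rcases y with y | j
    · exact absurd (congrArg inl (Subsingleton.elim x y)) h.ne
    · exact (e j).2
    · exact G.adj_symm (e i).2
    · exact h.elim
  · rcases x with x | i <;> rcases y with y | j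
    · exact congrArg inl (Subsingleton.elim x y)
    · exact absurd h (e j).2.ne
    · exact absurd h.symm (e i).2.ne
    · exact congrArg inr (e.injective (Subtype.ext h))

lemma fan_isContained_graphJoin_bot_of_le_ncard [Finite V] {G : SimpleGraph V} {ℓ m : ℕ}
    (hm : (ℓ + 1) / 2 ≤ m) {a : V} (ha : ℓ / 2 ≤ (G.neighborSet a).ncard) :
    fan ℓ ⊑ graphJoin G (⊥ : SimpleGraph (Fin m)) :=
  have hpath : pathGraph ℓ ⊑ graphJoin (⊥ : SimpleGraph (Fin (ℓ / 2))) ⊥ :=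
    graphJoin_bot_bot ▸ pathGraph_isContained_completeBipartiteGraph ℓ
  (graphJoin_isContained_graphJoin .rfl hpath).trans <|
    (graphJoinAssoc _ _ _).isContained'.trans <|
      graphJoin_isContained_graphJoin (star_isContained_of_le_ncard ha)
        (bot_isContained_iff_card_le.2 (by simpa using hm))

lemma fan_isContained_graphJoin_bot_of_pathGraph_isContained {G : SimpleGraph V} {ℓ m : ℕ}
    (hm : 0 < m) (h : pathGraph ℓ ⊑ G) : fan ℓ ⊑ graphJoin G (⊥ : SimpleGraph (Fin m)) := by
  refine (graphJoinComm _ _).isContained.trans (graphJoin_isContained_graphJoin h ?_)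
  rw [Subsingleton.elim (⊤ : SimpleGraph (Fin 1)) ⊥]
  exact bot_isContained_iff_card_le.2 (by simpa [Nat.one_le_iff_ne_zero] using hm.ne')

namespace SimpleGraph.Copy

lemma map_adj {A : SimpleGraph α} {B : SimpleGraph β} (f : Copy A B) {x y : α} (h : A.Adj x y) :
    B.Adj (f x) (f y) :=
  f.toHom.map_adj h

lemma isContained_of_apply_inl_eq_inr {A : SimpleGraph γ} {F : SimpleGraph β}
    {G : SimpleGraph V} (f : Copy (graphJoin A F) (graphJoin G (⊥ : SimpleGraph W))) {c : γ}
    {b : W} (hc : f (inl c) = inr b) : F ⊑ G := by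
  have hleft : ∀ x, ∃ v, f (inr x) = inl v := fun x => by
    have h := f.map_adj (show (graphJoin A F).Adj (inr x) (inl c) from trivial)
    rw [hc] at h
    rcases hx : f (inr x) with v | w
    · exact ⟨v, rfl⟩
    · rw [hx] at h
      exact h.elim
  choose g hg using hleft
  refine ⟨⟨⟨g, fun {x y} hxy => ?_⟩, fun x y hxy => ?_⟩⟩
  · have h := f.map_adj (show (graphJoin A F).Adj (inr x) (inr y) from hxy)
    rwa [hg, hg] at h
  · change g x = g y at hxy
    exact inr_injective (f.injective (by simp only [toHom_apply, hg, hxy]))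

lemma div_two_le_ncard_neighborSet [Finite V] {A : SimpleGraph γ} {G : SimpleGraph V}
    {ℓ : ℕ} (f : Copy (graphJoin A (pathGraph ℓ)) (graphJoin G (⊥ : SimpleGraph W))) {c : γ}
    {a : V} (hc : f (inl c) = inl a) : ℓ / 2 ≤ (G.neighborSet a).ncard := by
  classical
  set S := Finset.univ.filter fun i : Fin ℓ => (f (inr i)).isRight
  have hS : (pathGraph ℓ).IsIndepSet (S : Set (Fin ℓ)) := by
    intro i hi j hj _ hij
    have h := f.map_adj (show (graphJoin A (pathGraph ℓ)).Adj (inr i) (inr j) from hij)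
    simp only [S, Finset.coe_filter, Finset.mem_univ, true_and, Set.mem_ofPred_eq,
      isRight_iff] at hi hj
    obtain ⟨b, hb⟩ := hi
    obtain ⟨b', hb'⟩ := hj
    rw [hb, hb'] at h
    exact h
  have hmaps : ∀ i ∈ (Sᶜ : Set (Fin ℓ)), f (inr i) ∈ inl '' G.neighborSet a := by
    intro i hi
    simp only [S, Finset.coe_filter, Finset.mem_univ, true_and, Set.mem_compl_iff,
      Set.mem_ofPred_eq, Bool.not_eq_true, isRight_eq_false, isLeft_iff] at hi
    obtain ⟨v, hv⟩ := hi
    have h := f.map_adj (show (graphJoin A (pathGraph ℓ)).Adj (inl c) (inr i) from trivial)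
    rw [hc, hv] at h
    exact ⟨v, h, hv.symm⟩
  have hcompl : Sᶜ.card ≤ (G.neighborSet a).ncard :=
    calc Sᶜ.card = (Sᶜ : Set (Fin ℓ)).ncard := by rw [← Finset.coe_compl, Set.ncard_coe_finset]
      _ ≤ (inl '' G.neighborSet a : Set (V ⊕ W)).ncard :=
        Set.ncard_le_ncard_of_injOn _ hmaps ((f.injective : Injective f).comp inr_injective).injOn
          ((Set.toFinite _).image _)
      _ = (G.neighborSet a).ncard := Set.ncard_image_of_injective _ inl_injective
  have hsplit := S.card_add_card_compl
  have hindep := card_le_of_isIndepSet_pathGraph hS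
  simp only [Fintype.card_fin] at hsplit
  omega

end SimpleGraph.Copy

theorem fan_isContained_graphJoin_bot_iff [Finite V] {G : SimpleGraph V} {ℓ m : ℕ}
    (hm₀ : 0 < m) (hm : (ℓ + 1) / 2 ≤ m) :
    fan ℓ ⊑ graphJoin G (⊥ : SimpleGraph (Fin m)) ↔
      (∃ a, ℓ / 2 ≤ (G.neighborSet a).ncard) ∨ pathGraph ℓ ⊑ G := by
  refine ⟨fun ⟨f⟩ => ?_, ?_⟩
  · rcases hc : f (inl 0) with a | b
    · exact .inl ⟨a, f.div_two_le_ncard_neighborSet hc⟩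
    · exact .inr (f.isContained_of_apply_inl_eq_inr hc)
  · rintro (⟨a, ha⟩ | h)
    · exact fan_isContained_graphJoin_bot_of_le_ncard hm ha
    · exact fan_isContained_graphJoin_bot_of_pathGraph_isContained hm₀ h

theorem join_empty_fan_free_iff_general (k : ℕ)
    (V : Type) [Fintype V] (G : SimpleGraph V) :
    ¬ ContainsCopy (fan (2 * k + 3))
        (graphJoin G (⊥ : SimpleGraph (Fin (2 * k + 3)))) ↔
      (∀ v, gdeg G v ≤ k) ∧ ¬ ContainsCopy (pathGraph (2 * k + 3)) G := by
  have hhalf : (2 * k + 3) / 2 = k + 1 := by omega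
  rw [containsCopy_iff_isContained, containsCopy_iff_isContained,
    fan_isContained_graphJoin_bot_iff (by omega) (by omega), hhalf]
  simp [gdeg]

/-- `G ∨ ¬K_{2k+3}` is `H_{2k+3}`-free if and only if `Δ(G) ≤ k` and `G`
is `P_{2k+3}`-free. -/
theorem join_empty_fan_free_iff (k : ℕ) (hk : 1 ≤ k)
    (V : Type) [Fintype V] (G : SimpleGraph V) :
    ¬ ContainsCopy (fan (2 * k + 3))
        (graphJoin G (⊥ : SimpleGraph (Fin (2 * k + 3)))) ↔
      (∀ v, gdeg G v ≤ k) ∧ ¬ ContainsCopy (pathGraph (2 * k + 3)) G :=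
  join_empty_fan_free_iff_general k V G
end
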